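/- Let ε ∼ N(0, γ·I_d) for some γ > 0 and relu(t) = max(t, 0). For any two vectors u, v ∈ ℝᵈ, E[(relu(⟨u, ε⟩) − relu(⟨v, ε⟩))²] ≥ (γ/4)·‖u − v‖². -/

import Mathlib

/-!
Since `relu a - relu (-a) = a`, the difference `a - b` splits as `p - q` with
`p = relu a - relu b` and `q = relu (-a) - relu (-b)`, so `(a - b)² ≤ 2 (p² + q²)`.
For `a = ⟨u, ε⟩`, `b = ⟨v, ε⟩` the symmetry `ε ↦ -ε` of the centred Gaussian exchanges `p` and `q`,
so `E[q²] = E[p²]` and `E[⟨u - v, ε⟩²] ≤ 4 E[p²]`; finally `E[⟨w, ε⟩²] = γ ‖w‖²`.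
-/

open MeasureTheory ProbabilityTheory Matrix


lemma sq_max_sub_max_le_sq_sub (a b : ℝ) : (max a 0 - max b 0) ^ 2 ≤ (a - b) ^ 2 :=
  sq_le_sq.mpr (abs_max_sub_max_le_abs a b 0)

lemma sq_sub_le_two_mul_sq_max_sub_max_add (a b : ℝ) :
    (a - b) ^ 2 ≤ 2 * ((max a 0 - max b 0) ^ 2 + (max (-a) 0 - max (-b) 0) ^ 2) := by
  have hrelu : ∀ x : ℝ, max x 0 - max (-x) 0 = x := fun x => by
    rcases le_total x 0 with h | h <;> simp [h]
  have hab : a - b = (max a 0 - max b 0) - (max (-a) 0 - max (-b) 0) := by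
    linarith [hrelu a, hrelu b]
  rw [hab]
  nlinarith [sq_nonneg ((max a 0 - max b 0) + (max (-a) 0 - max (-b) 0))]

section Symmetric

variable {Ω : Type*} [MeasurableSpace Ω] [AddGroup Ω] [MeasurableNeg Ω]
  {μ : Measure Ω} [μ.IsNegInvariant]

lemma integral_eq_zero_of_odd {X : Ω → ℝ} (hX : ∀ ω, X (-ω) = -X ω) : ∫ ω, X ω ∂μ = 0 := by
  have h := integral_neg_eq_self X μ
  simp only [hX, integral_neg] at h
  linarith

theorem integral_sq_sub_le_four_mul_integral_sq_max_sub_max {X Y : Ω → ℝ}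
    (hX : ∀ ω, X (-ω) = -X ω) (hY : ∀ ω, Y (-ω) = -Y ω) (hX₂ : MemLp X 2 μ) (hY₂ : MemLp Y 2 μ) :
    ∫ ω, (X ω - Y ω) ^ 2 ∂μ ≤ 4 * ∫ ω, (max (X ω) 0 - max (Y ω) 0) ^ 2 ∂μ := by
  set f : Ω → ℝ := fun ω => (max (X ω) 0 - max (Y ω) 0) ^ 2
  have hsub : Integrable (fun ω => (X ω - Y ω) ^ 2) μ := (hX₂.sub hY₂).integrable_sq
  have hf : Integrable f μ := by
    refine hsub.mono' ?_ (ae_of_all _ fun ω => ?_)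
    · exact (((hX₂.aestronglyMeasurable.sup aestronglyMeasurable_const).sub
        (hY₂.aestronglyMeasurable.sup aestronglyMeasurable_const)).pow 2)
    · rw [Real.norm_of_nonneg (sq_nonneg _)]
      exact sq_max_sub_max_le_sq_sub _ _
  have hf_neg : ∫ ω, f (-ω) ∂μ = ∫ ω, f ω ∂μ := integral_neg_eq_self f μ
  calc ∫ ω, (X ω - Y ω) ^ 2 ∂μ ≤ ∫ ω, 2 * (f ω + f (-ω)) ∂μ := by
        refine integral_mono hsub ((hf.add hf.comp_neg).const_mul 2) fun ω => ?_
        simpa only [f, hX, hY] using sq_sub_le_two_mul_sq_max_sub_max_add (X ω) (Y ω)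
    _ = 4 * ∫ ω, f ω ∂μ := by
        rw [integral_const_mul, integral_add hf hf.comp_neg, hf_neg]; ring

end Symmetric

instance isNegInvariant_gaussianReal (v : NNReal) : (gaussianReal 0 v).IsNegInvariant :=
  ⟨(gaussianReal_map_neg (μ := 0) (v := v)).trans (by rw [neg_zero])⟩

section GaussianPi

variable {ι : Type*} [Fintype ι]

lemma dotProduct_eq_sum_fun (w : ι → ℝ) :
    (fun ε : ι → ℝ => w ⬝ᵥ ε) = ∑ i, fun ε => w i * ε i := by
  ext ε; simp [dotProduct]

lemma memLp_dotProduct_pi_gaussianReal (v : NNReal) (w : ι → ℝ) :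
    MemLp (fun ε => w ⬝ᵥ ε) 2 (Measure.pi fun _ : ι => gaussianReal 0 v) := by
  rw [dotProduct_eq_sum_fun]
  exact memLp_finsetSum' _ fun i _ => ((memLp_id_gaussianReal 2).comp_measurePreserving
    (measurePreserving_eval _ i)).const_mul (w i)

lemma integral_dotProduct_sq_pi_gaussianReal (v : NNReal) (w : ι → ℝ) :
    ∫ ε, (w ⬝ᵥ ε) ^ 2 ∂(Measure.pi fun _ : ι => gaussianReal 0 v) = v * (w ⬝ᵥ w) := by
  have hmean : ∫ ε, w ⬝ᵥ ε ∂(Measure.pi fun _ : ι => gaussianReal 0 v) = 0 :=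
    integral_eq_zero_of_odd fun ε => dotProduct_neg w ε
  rw [← variance_of_integral_eq_zero (memLp_dotProduct_pi_gaussianReal v w).aemeasurable hmean,
    dotProduct_eq_sum_fun, variance_sum_pi (X := fun i x => w i * x)
      fun i => (memLp_id_gaussianReal 2).const_mul (w i)]
  change ∑ i, Var[fun x ↦ w i * id x; gaussianReal 0 v] = _
  simp_rw [variance_const_mul, variance_id_gaussianReal, dotProduct, Finset.mul_sum]
  exact Finset.sum_congr rfl fun i _ => by ring

end GaussianPi

theorem stmt7_general (d : ℕ) (γ : NNReal) (u v : Fin d → ℝ) :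
    ((γ : ℝ) / 4) * ((u - v) ⬝ᵥ (u - v))
      ≤ ∫ ε : Fin d → ℝ,
          (max (u ⬝ᵥ ε) 0 - max (v ⬝ᵥ ε) 0) ^ 2
            ∂(Measure.pi fun _ : Fin d => gaussianReal 0 γ) := by
  have key := integral_sq_sub_le_four_mul_integral_sq_max_sub_max
    (μ := Measure.pi fun _ : Fin d => gaussianReal 0 γ) (dotProduct_neg u) (dotProduct_neg v)
    (memLp_dotProduct_pi_gaussianReal γ u) (memLp_dotProduct_pi_gaussianReal γ v)
  simp_rw [← sub_dotProduct, integral_dotProduct_sq_pi_gaussianReal] at key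
  linarith

/-- For ε ∼ N(0, γI_d) with γ > 0 and any u, v ∈ ℝᵈ,
E[(relu⟨u,ε⟩ − relu⟨v,ε⟩)²] ≥ (γ/4)‖u − v‖². -/
theorem stmt7 (d : ℕ) (γ : NNReal) (hγ : 0 < γ) (u v : Fin d → ℝ) :
    ((γ : ℝ) / 4) * ((u - v) ⬝ᵥ (u - v))
      ≤ ∫ ε : Fin d → ℝ,
          (max (u ⬝ᵥ ε) 0 - max (v ⬝ᵥ ε) 0) ^ 2
            ∂(Measure.pi fun _ : Fin d => gaussianReal 0 γ) :=
  stmt7_general d γ u v
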